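/- arXiv:2409.15225 — 2 statements merged into one kernel-verified Lean document; each statement's English description precedes it below -/
import Mathlib

section
/- Let μ > 0 be a non-integer real number and let p ∈ V_μ. Then W1(p, p*) ≤ (2μ / min{μ−⌊μ⌋, ⌊μ⌋+1−μ}) · (G[p] − G[p*]), where p* is the shifted Bernoulli distribution with mean μ. -/
/-- Cumulative distribution function of a pmf on ℕ: `F n = ∑_{m ≤ n} p m`. -/
noncomputable def cdf (p : ℕ → ℝ) (n : ℕ) : ℝ := ∑ m ∈ Finset.range (n + 1), p m

/-- Wasserstein-1 distance between two pmfs on ℕ, `W1(p,q) = ∑_{n ≥ 0} |F_n - H_n|`. -/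
noncomputable def W1 (p q : ℕ → ℝ) : ℝ := ∑' n : ℕ, |cdf p n - cdf q n|

/-- Gini index of a pmf on ℕ with mean μ: `G[p] = (1/(2μ)) ∑_i ∑_j |i-j| p_i p_j`. -/
noncomputable def Gini (μ : ℝ) (p : ℕ → ℝ) : ℝ :=
  (1 / (2 * μ)) * ∑' i : ℕ, ∑' j : ℕ, |(i : ℝ) - (j : ℝ)| * p i * p j

/-- The shifted Bernoulli distribution with mean μ:
`p*_{⌊μ⌋} = 1 - μ + ⌊μ⌋`, `p*_{⌊μ⌋+1} = μ - ⌊μ⌋`, `p*_n = 0` otherwise. -/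
noncomputable def pstar (μ : ℝ) : ℕ → ℝ := fun n =>
  if n = ⌊μ⌋₊ then 1 - μ + (⌊μ⌋₊ : ℝ)
  else if n = ⌊μ⌋₊ + 1 then μ - (⌊μ⌋₊ : ℝ)
  else 0

/-- The Dirac distribution on ℕ concentrated at `k`. -/
noncomputable def dirac (k : ℕ) : ℕ → ℝ := fun n => if n = k then 1 else 0

/-!
Write `F` for the CDF of `p`, `M = ⌊μ⌋₊` and `θ = μ - M`, so that the CDF of `p*` is `0` below `M`,
`1 - θ` at `M` and `1` above. Counting, for each pair `i, j`, the `n` lying between them turns the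
Gini double sum into `2 ∑ F_n (1 - F_n)`. With `A = ∑_{n<M} F_n`, `c = F_M - (1 - θ)` and
`B = ∑_{n>M} (1 - F_n)`, the tail-sum formula for the mean gives `B = A + c`, so
`W1(p, p*) = A + |c| + B`. Monotonicity of `F` gives `F_n (1 - F_n) ≥ (1 - F_M) F_n` below `M` and
`≥ F_M (1 - F_n)` above it, which collapses to `∑ F (1 - F) - θ (1 - θ) ≥ A + θ c`; together with
`A + c ≥ 0` this yields the bound.
-/

open Finset

theorem HasSum.comm_of_nonneg {α β : Type*} {f : α → β → ℝ} (hf : ∀ a b, 0 ≤ f a b)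
    {g : α → ℝ} {h : β → ℝ} {s : ℝ} (hg : ∀ a, HasSum (f a) (g a)) (hs : HasSum g s)
    (hh : ∀ b, HasSum (fun a => f a b) (h b)) : HasSum h s := by
  have hsum : Summable (Function.uncurry f) :=
    (summable_prod_of_nonneg fun _ => hf _ _).2
      ⟨fun a => (hg a).summable, by
        simpa only [Function.uncurry_apply_pair, (hg _).tsum_eq] using hs.summable⟩
  have hf_s : HasSum (Function.uncurry f) s :=
    (hsum.hasSum.prod_fiberwise hg).unique hs ▸ hsum.hasSum
  exact ((Equiv.prodComm β α).hasSum_iff.2 hf_s).prod_fiberwise hh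

theorem hasSum_ite_mem (s : Finset ℕ) (c : ℝ) :
    HasSum (fun n => if n ∈ s then c else 0) (#s * c) := by
  have h : HasSum (fun n => if n ∈ s then c else 0) (∑ n ∈ s, if n ∈ s then c else 0) :=
    hasSum_sum_of_ne_finset_zero fun n hn => if_neg hn
  rwa [sum_ite_of_true fun _ h => h, sum_const, nsmul_eq_mul] at h

theorem HasSum.mul_of_nonneg {ι κ : Type*} {f : ι → ℝ} {g : κ → ℝ} {s t : ℝ}
    (hf : HasSum f s) (hg : HasSum g t) (hf0 : 0 ≤ f) (hg0 : 0 ≤ g) :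
    HasSum (fun x : ι × κ => f x.1 * g x.2) (s * t) :=
  hf.mul hg (hf.summable.mul_of_nonneg hg.summable hf0 hg0)

theorem tsum_eq_sum_range_add_add_tsum {G : Type*} [AddCommGroup G] [TopologicalSpace G]
    [IsTopologicalAddGroup G] [T2Space G] {f : ℕ → G} (hf : Summable f) (M : ℕ) :
    ∑' n, f n = ∑ n ∈ range M, f n + f M + ∑' k, f (k + (M + 1)) := by
  rw [← hf.sum_add_tsum_nat_add (M + 1), sum_range_succ]

theorem summable_mul_one_sub {F : ℕ → ℝ} (h0 : ∀ n, 0 ≤ F n) (h1 : ∀ n, F n ≤ 1)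
    (hs : Summable fun n => 1 - F n) : Summable fun n => F n * (1 - F n) :=
  hs.of_nonneg_of_le (fun n => mul_nonneg (h0 n) (by linarith [h1 n]))
    fun n => by nlinarith [h0 n, h1 n]

theorem natCast_sub_add_natCast_sub (i j : ℕ) :
    ((j - i : ℕ) : ℝ) + ((i - j : ℕ) : ℝ) = |(i : ℝ) - j| := by
  rcases le_total i j with h | h
  · rw [Nat.sub_eq_zero_of_le h, Nat.cast_sub h, abs_of_nonpos (by simpa using h)]; simp
  · rw [Nat.sub_eq_zero_of_le h, Nat.cast_sub h, abs_of_nonneg (by simpa using h)]; simp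

section
variable {p : ℕ → ℝ}

theorem cdf_nonneg (hp : ∀ n, 0 ≤ p n) (n : ℕ) : 0 ≤ cdf p n :=
  sum_nonneg fun i _ => hp i

theorem cdf_mono (hp : ∀ n, 0 ≤ p n) : Monotone (cdf p) := fun _ _ h =>
  sum_le_sum_of_subset_of_nonneg (range_subset_range.2 (by omega)) fun i _ _ => hp i

theorem cdf_le_one (hp : ∀ n, 0 ≤ p n) (hsum : HasSum p 1) (n : ℕ) : cdf p n ≤ 1 :=
  sum_le_hasSum _ (fun i _ => hp i) hsum

theorem hasSum_ite_le_cdf (p : ℕ → ℝ) (n : ℕ) :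
    HasSum (fun k => if k ≤ n then p k else 0) (cdf p n) := by
  have h : HasSum (fun k => if k ≤ n then p k else 0)
      (∑ k ∈ range (n + 1), if k ≤ n then p k else 0) :=
    hasSum_sum_of_ne_finset_zero fun k hk => if_neg (by simpa [Nat.lt_succ_iff] using hk)
  rwa [sum_ite_of_true fun k hk => Nat.lt_succ_iff.1 (mem_range.1 hk)] at h

theorem hasSum_ite_lt_one_sub_cdf (hsum : HasSum p 1) (n : ℕ) :
    HasSum (fun k => if n < k then p k else 0) (1 - cdf p n) := by
  refine (hsum.sub (hasSum_ite_le_cdf p n)).congr_fun fun k => ?_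
  split_ifs <;> first | omega | ring

theorem hasSum_one_sub_cdf (hp : ∀ n, 0 ≤ p n) (hsum : HasSum p 1) {μ : ℝ}
    (hmean : HasSum (fun n : ℕ => (n : ℝ) * p n) μ) :
    HasSum (fun n => 1 - cdf p n) μ := by
  refine HasSum.comm_of_nonneg (f := fun k n => if n ∈ range k then p k else 0)
    (fun k n => ite_nonneg (hp k) le_rfl) (fun k => ?_) hmean fun n => ?_
  · simpa using hasSum_ite_mem (range k) (p k)
  · simpa using hasSum_ite_lt_one_sub_cdf hsum n

theorem tsum_tsum_abs_sub_mul_mul (hp : ∀ n, 0 ≤ p n) (hsum : HasSum p 1) {μ : ℝ}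
    (hmean : HasSum (fun n : ℕ => (n : ℝ) * p n) μ) :
    ∑' i : ℕ, ∑' j : ℕ, |(i : ℝ) - j| * p i * p j = 2 * ∑' n, cdf p n * (1 - cdf p n) := by
  set T : ℕ × ℕ → ℝ := fun z => |(z.1 : ℝ) - z.2| * p z.1 * p z.2
  set f : ℕ → ℕ × ℕ → ℝ := fun n z =>
    (if n ∈ Ico z.1 z.2 then p z.1 * p z.2 else 0) + (if n ∈ Ico z.2 z.1 then p z.1 * p z.2 else 0)
  have hf0 : ∀ n z, 0 ≤ f n z := fun n z =>
    have := mul_nonneg (hp z.1) (hp z.2)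
    add_nonneg (ite_nonneg this le_rfl) (ite_nonneg this le_rfl)
  have hrow : ∀ z, HasSum (fun n => f n z) (T z) := fun z => by
    have h := (hasSum_ite_mem (Ico z.1 z.2) (p z.1 * p z.2)).add
      (hasSum_ite_mem (Ico z.2 z.1) (p z.1 * p z.2))
    rwa [Nat.card_Ico, Nat.card_Ico, ← add_mul, natCast_sub_add_natCast_sub, ← mul_assoc] at h
  have hcut : ∀ n, 0 ≤ fun k => if k ≤ n then p k else 0 := fun n k => ite_nonneg (hp k) le_rfl
  have htail : ∀ n, 0 ≤ fun k => if n < k then p k else 0 := fun n k => ite_nonneg (hp k) le_rfl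
  have hcol : ∀ n, HasSum (f n) (2 * (cdf p n * (1 - cdf p n))) := fun n => by
    have h := ((hasSum_ite_le_cdf p n).mul_of_nonneg (hasSum_ite_lt_one_sub_cdf hsum n)
      (hcut n) (htail n)).add
      ((hasSum_ite_lt_one_sub_cdf hsum n).mul_of_nonneg (hasSum_ite_le_cdf p n) (htail n) (hcut n))
    convert h using 1
    · funext z
      simp only [f, mem_Ico, ite_zero_mul_ite_zero, and_comm]
    · ring
  have hT : HasSum T (∑' n, 2 * (cdf p n * (1 - cdf p n))) :=
    HasSum.comm_of_nonneg hf0 hcol ((summable_mul_one_sub (cdf_nonneg hp) (cdf_le_one hp hsum)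
      (hasSum_one_sub_cdf hp hsum hmean).summable).mul_left 2).hasSum hrow
  rw [← tsum_mul_left, ← hT.tsum_eq, hT.summable.tsum_prod' hT.summable.prod_factor]

end

section
variable {μ : ℝ}

theorem pstar_floor : pstar μ ⌊μ⌋₊ = 1 - μ + ⌊μ⌋₊ := if_pos rfl

theorem pstar_floor_add_one : pstar μ (⌊μ⌋₊ + 1) = μ - ⌊μ⌋₊ := by
  simp [pstar]

theorem pstar_eq_zero {n : ℕ} (h₁ : n ≠ ⌊μ⌋₊) (h₂ : n ≠ ⌊μ⌋₊ + 1) : pstar μ n = 0 := by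
  simp [pstar, h₁, h₂]

theorem pstar_nonneg (hμ : 0 ≤ μ) (n : ℕ) : 0 ≤ pstar μ n := by
  have := Nat.floor_le hμ
  have := Nat.lt_floor_add_one μ
  unfold pstar
  split_ifs <;> linarith

theorem hasSum_mul_pstar (g : ℕ → ℝ) :
    HasSum (fun n => g n * pstar μ n)
      (g ⌊μ⌋₊ * (1 - μ + ⌊μ⌋₊) + g (⌊μ⌋₊ + 1) * (μ - ⌊μ⌋₊)) := by
  have h : HasSum (fun n => g n * pstar μ n) (∑ n ∈ {⌊μ⌋₊, ⌊μ⌋₊ + 1}, g n * pstar μ n) :=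
    hasSum_sum_of_ne_finset_zero fun n hn => by
      simp only [mem_insert, mem_singleton, not_or] at hn
      rw [pstar_eq_zero hn.1 hn.2, mul_zero]
  rwa [sum_pair (by omega), pstar_floor, pstar_floor_add_one] at h

theorem cdf_pstar_of_lt {n : ℕ} (hn : n < ⌊μ⌋₊) : cdf (pstar μ) n = 0 :=
  sum_eq_zero fun k hk => pstar_eq_zero (by simp at hk; omega) (by simp at hk; omega)

theorem cdf_pstar_floor : cdf (pstar μ) ⌊μ⌋₊ = 1 - μ + ⌊μ⌋₊ := by
  rw [cdf, sum_eq_single_of_mem _ (self_mem_range_succ _) fun k hk hk' =>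
    pstar_eq_zero hk' (by simp at hk; omega), pstar_floor]

theorem cdf_pstar_of_floor_lt {n : ℕ} (hn : ⌊μ⌋₊ < n) : cdf (pstar μ) n = 1 := by
  rw [cdf, sum_eq_add ⌊μ⌋₊ (⌊μ⌋₊ + 1) (by omega) (fun k _ hk => pstar_eq_zero hk.1 hk.2)
    (fun h => by simp at h; omega) (fun h => by simp at h; omega), pstar_floor,
    pstar_floor_add_one]
  ring

theorem tsum_cdf_pstar_mul_one_sub :
    ∑' n, cdf (pstar μ) n * (1 - cdf (pstar μ) n) = (1 - μ + ⌊μ⌋₊) * (μ - ⌊μ⌋₊) := by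
  rw [tsum_eq_single ⌊μ⌋₊ fun n hn => ?_, cdf_pstar_floor]
  · ring
  · rcases Nat.lt_or_gt_of_ne hn with h | h
    · rw [cdf_pstar_of_lt h, zero_mul]
    · rw [cdf_pstar_of_floor_lt h, sub_self, mul_zero]

theorem hasSum_pstar : HasSum (pstar μ) 1 := by
  have h := hasSum_mul_pstar (μ := μ) fun _ => 1
  rwa [show (1 : ℝ) * (1 - μ + ⌊μ⌋₊) + 1 * (μ - ⌊μ⌋₊) = 1 by ring,
    funext fun n => one_mul (pstar μ n)] at h

theorem hasSum_natCast_mul_pstar : HasSum (fun n : ℕ => (n : ℝ) * pstar μ n) μ := by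
  have h := hasSum_mul_pstar (μ := μ) Nat.cast
  rwa [Nat.cast_add_one,
    show (⌊μ⌋₊ : ℝ) * (1 - μ + ⌊μ⌋₊) + (⌊μ⌋₊ + 1) * (μ - ⌊μ⌋₊) = μ by ring] at h

end

section
variable {F : ℕ → ℝ}

theorem le_tsum_mul_one_sub (hmono : Monotone F) (h0 : ∀ n, 0 ≤ F n) (h1 : ∀ n, F n ≤ 1)
    (hs : Summable fun n => 1 - F n) (M : ℕ) :
    (1 - F M) * ∑ n ∈ range M, F n + F M * (1 - F M) + F M * ∑' k, (1 - F (k + (M + 1)))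
      ≤ ∑' n, F n * (1 - F n) := by
  rw [tsum_eq_sum_range_add_add_tsum (summable_mul_one_sub h0 h1 hs) M]
  gcongr ?_ + _ + ?_
  · rw [mul_sum]
    refine sum_le_sum fun n hn => ?_
    have : F n ≤ F M := hmono (mem_range.1 hn).le
    nlinarith [h0 n]
  · rw [← tsum_mul_left]
    refine Summable.tsum_le_tsum (fun k => ?_) (((summable_nat_add_iff _).2 hs).mul_left _)
      ((summable_nat_add_iff _).2 (summable_mul_one_sub h0 h1 hs))
    have : F M ≤ F (k + (M + 1)) := hmono (by omega)
    nlinarith [h1 (k + (M + 1))]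

theorem tsum_abs_sub_cdf_pstar {μ : ℝ} (h0 : ∀ n, 0 ≤ F n) (h1 : ∀ n, F n ≤ 1)
    (hs : Summable fun n => 1 - F n) :
    ∑' n, |F n - cdf (pstar μ) n| = ∑ n ∈ range ⌊μ⌋₊, F n + |F ⌊μ⌋₊ - (1 - μ + ⌊μ⌋₊)|
      + ∑' k, (1 - F (k + (⌊μ⌋₊ + 1))) := by
  have htail : ∀ k, |F (k + (⌊μ⌋₊ + 1)) - cdf (pstar μ) (k + (⌊μ⌋₊ + 1))|
      = 1 - F (k + (⌊μ⌋₊ + 1)) := fun k => by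
    rw [cdf_pstar_of_floor_lt (by omega), abs_sub_comm,
      abs_of_nonneg (by linarith [h1 (k + (⌊μ⌋₊ + 1))])]
  have hsum : Summable fun n => |F n - cdf (pstar μ) n| :=
    (summable_nat_add_iff (⌊μ⌋₊ + 1)).1 <| by
      simpa only [htail] using (summable_nat_add_iff (⌊μ⌋₊ + 1)).2 hs
  rw [tsum_eq_sum_range_add_add_tsum hsum ⌊μ⌋₊, cdf_pstar_floor, tsum_congr htail]
  congr 2
  refine sum_congr rfl fun n hn => ?_
  rw [cdf_pstar_of_lt (mem_range.1 hn), sub_zero, abs_of_nonneg (h0 n)]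

theorem tsum_one_sub_nat_add_eq {μ : ℝ} (htail : HasSum (fun n => 1 - F n) μ) (M : ℕ) :
    ∑' k, (1 - F (k + (M + 1))) = ∑ n ∈ range M, F n + F M - (1 - μ + M) := by
  have h := tsum_eq_sum_range_add_add_tsum htail.summable M
  rw [htail.tsum_eq, sum_sub_distrib, sum_const, card_range, nsmul_one] at h
  linarith

theorem tsum_abs_sub_cdf_pstar_le {μ : ℝ} (hμ : 0 < μ) (hni : ∀ n : ℕ, μ ≠ n)
    (hmono : Monotone F) (h0 : ∀ n, 0 ≤ F n) (h1 : ∀ n, F n ≤ 1)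
    (htail : HasSum (fun n => 1 - F n) μ) :
    ∑' n, |F n - cdf (pstar μ) n| ≤ 2 / min (μ - ⌊μ⌋₊) (⌊μ⌋₊ + 1 - μ) *
      (∑' n, F n * (1 - F n) - (1 - μ + ⌊μ⌋₊) * (μ - ⌊μ⌋₊)) := by
  set M := ⌊μ⌋₊
  set θ := μ - M
  set δ := min θ (M + 1 - μ)
  have hθ : 0 < θ := sub_pos.2 <| (Nat.floor_le hμ.le).lt_of_ne (hni M).symm
  have hθ1 : θ < 1 := by linarith [Nat.lt_floor_add_one μ]
  have hδ : 0 < δ := lt_min hθ (by linarith)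
  set A := ∑ n ∈ range M, F n
  set c := F M - (1 - θ)
  have hA : 0 ≤ A := sum_nonneg fun n _ => h0 n
  have hB : ∑' k, (1 - F (k + (M + 1))) = A + c := by
    rw [tsum_one_sub_nat_add_eq htail]; ring
  have hAc : 0 ≤ A + c := hB ▸ tsum_nonneg fun k => by linarith [h1 (k + (M + 1))]
  have hgap : A + θ * c ≤ ∑' n, F n * (1 - F n) - (1 - θ) * θ := by
    have h := le_tsum_mul_one_sub hmono h0 h1 htail.summable M
    rw [hB, show F M = 1 - θ + c by ring] at h
    linarith
  rw [tsum_abs_sub_cdf_pstar h0 h1 htail.summable, hB, show 1 - μ + M = 1 - θ by ring]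
  refine le_trans ?_ (mul_le_mul_of_nonneg_left hgap (by positivity))
  rw [div_mul_eq_mul_div, le_div_iff₀ hδ]
  have hδθ : δ ≤ θ := min_le_left _ _
  have hδθ' : δ ≤ 1 - θ := (min_le_right _ _).trans_eq (by ring)
  rcases abs_cases c with ⟨hc, hc0⟩ | ⟨hc, hc0⟩ <;> rw [hc]
  · nlinarith [mul_nonneg (sub_nonneg.2 (hδθ.trans hθ1.le)) hA,
      mul_nonneg (sub_nonneg.2 hδθ) hc0]
  · nlinarith [mul_nonneg (sub_nonneg.2 hδθ') hA,
      mul_nonneg hθ.le hAc]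

end

theorem stmt_1 (μ : ℝ) (hμ : 0 < μ) (hni : ∀ n : ℕ, μ ≠ (n : ℝ)) (p : ℕ → ℝ)
    (hpos : ∀ n, 0 ≤ p n) (hsum : HasSum p 1)
    (hmean : HasSum (fun n : ℕ => (n : ℝ) * p n) μ) :
    W1 p (pstar μ) ≤
      (2 * μ / min (μ - (⌊μ⌋₊ : ℝ)) ((⌊μ⌋₊ : ℝ) + 1 - μ)) *
        (Gini μ p - Gini μ (pstar μ)) := by
  have hGini : Gini μ p - Gini μ (pstar μ) = μ⁻¹ *
      (∑' n, cdf p n * (1 - cdf p n) - (1 - μ + ⌊μ⌋₊) * (μ - ⌊μ⌋₊)) := by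
    rw [Gini, Gini, tsum_tsum_abs_sub_mul_mul hpos hsum hmean,
      tsum_tsum_abs_sub_mul_mul (pstar_nonneg hμ.le) hasSum_pstar hasSum_natCast_mul_pstar,
      tsum_cdf_pstar_mul_one_sub]
    field_simp
  have hW := tsum_abs_sub_cdf_pstar_le hμ hni (cdf_mono hpos) (cdf_nonneg hpos)
    (cdf_le_one hpos hsum) (hasSum_one_sub_cdf hpos hsum hmean)
  rwa [hGini, ← mul_assoc, div_mul_eq_mul_div, mul_assoc, mul_inv_cancel₀ hμ.ne', mul_one]
end

section
/- Let μ > 0 and let p ∈ V_μ. Then ‖p − δ_0‖_{ℓ¹} ≤ 2 √μ · √(1 − G[p]), where δ_0 = (1,0,0,...) is the Dirac distribution on ℕ concentrated at 0. In particular, ‖p − δ_0‖_{ℓ¹} → 0 whenever G[p] → 1. -/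
lemma hasSum_dirac_mul (p : ℕ → ℝ) (k : ℕ) : HasSum (fun n => dirac k n * p n) (p k) := by
  simpa [dirac] using
    hasSum_single (f := fun n => dirac k n * p n) k fun n hn => by simp [dirac, hn]

lemma tsum_abs_sub_dirac {p : ℕ → ℝ} (hpos : ∀ n, 0 ≤ p n) (hsum : HasSum p 1) (k : ℕ) :
    ∑' n, |p n - dirac k n| = 2 * (1 - p k) := by
  have hk : p k ≤ 1 := le_hasSum hsum k fun n _ => hpos n
  have hterm : ∀ n, |p n - dirac k n| = p n + if n = k then 1 - 2 * p k else 0 := by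
    intro n
    unfold dirac
    split_ifs with hn
    · subst hn
      rw [abs_of_nonpos (by linarith)]
      ring
    · simp [abs_of_nonneg (hpos n)]
  rw [tsum_congr hterm, (hsum.add (hasSum_ite_eq k _)).tsum_eq]
  ring

lemma abs_sub_le_add_sub_two_add_dirac {i : ℕ} (hi : 1 ≤ i) (j : ℕ) :
    |(i : ℝ) - j| ≤ i + j - 2 + 2 * dirac 0 j := by
  have hi' : (1 : ℝ) ≤ i := by exact_mod_cast hi
  rcases Nat.eq_zero_or_pos j with rfl | hj
  · simp [dirac, abs_of_nonneg (Nat.cast_nonneg (α := ℝ) i)]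
  · have hj' : (1 : ℝ) ≤ j := by exact_mod_cast hj
    simp only [dirac, hj.ne', if_false, mul_zero, add_zero]
    exact abs_le.mpr ⟨by linarith, by linarith⟩

lemma summable_abs_sub_mul {p : ℕ → ℝ} (hpos : ∀ n, 0 ≤ p n) (hp : Summable p)
    (hmean : Summable fun n : ℕ => (n : ℝ) * p n) (i : ℕ) :
    Summable fun j : ℕ => |(i : ℝ) - j| * p j := by
  refine Summable.of_nonneg_of_le (fun j => mul_nonneg (abs_nonneg _) (hpos j)) (fun j => ?_)
    ((hp.mul_left (i : ℝ)).add hmean)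
  have : |(i : ℝ) - j| ≤ i + j :=
    abs_sub_le_of_nonneg_of_le (by positivity) (by simp) (by positivity) (by simp)
  nlinarith [hpos j]

lemma tsum_abs_sub_mul_le {p : ℕ → ℝ} {μ : ℝ} (hpos : ∀ n, 0 ≤ p n) (hsum : HasSum p 1)
    (hmean : HasSum (fun n : ℕ => (n : ℝ) * p n) μ) (i : ℕ) :
    ∑' j : ℕ, |(i : ℝ) - j| * p j ≤ i + μ - 2 * (1 - p 0) * (1 - dirac 0 i) := by
  rcases Nat.eq_zero_or_pos i with rfl | hi
  · simp [dirac, abs_of_nonneg, hmean.tsum_eq]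
  have hbound : HasSum (fun j : ℕ => ((i : ℝ) - 2) * p j + ((j : ℝ) * p j + 2 * (dirac 0 j * p j)))
      ((i - 2) * 1 + (μ + 2 * p 0)) :=
    (hsum.mul_left _).add (hmean.add ((hasSum_dirac_mul p 0).mul_left 2))
  have hle : ∀ j : ℕ, |(i : ℝ) - j| * p j
      ≤ ((i : ℝ) - 2) * p j + ((j : ℝ) * p j + 2 * (dirac 0 j * p j)) := fun j => by
    nlinarith [abs_sub_le_add_sub_two_add_dirac hi j, hpos j]
  have hrow :=
    hasSum_le hle (summable_abs_sub_mul hpos hsum.summable hmean.summable i).hasSum hbound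
  simp only [dirac, hi.ne', if_false]
  linarith

lemma tsum_tsum_abs_sub_mul_mul_le {p : ℕ → ℝ} {μ : ℝ} (hpos : ∀ n, 0 ≤ p n)
    (hsum : HasSum p 1) (hmean : HasSum (fun n : ℕ => (n : ℝ) * p n) μ) :
    ∑' i : ℕ, ∑' j : ℕ, |(i : ℝ) - j| * p i * p j ≤ 2 * μ - 2 * (1 - p 0) ^ 2 := by
  set row : ℕ → ℝ := fun i => ∑' j : ℕ, |(i : ℝ) - j| * p j
  have hrow : ∀ i : ℕ, ∑' j : ℕ, |(i : ℝ) - j| * p i * p j = p i * row i := fun i => by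
    rw [← tsum_mul_left]
    exact tsum_congr fun j => by ring
  have hbound : HasSum (fun i : ℕ => (i : ℝ) * p i + μ * p i - 2 * (1 - p 0) * p i
      + 2 * (1 - p 0) * (dirac 0 i * p i)) (μ + μ * 1 - 2 * (1 - p 0) * 1 + 2 * (1 - p 0) * p 0) :=
    ((hmean.add (hsum.mul_left μ)).sub (hsum.mul_left _)).add ((hasSum_dirac_mul p 0).mul_left _)
  have hle : ∀ i : ℕ, p i * row i ≤ (i : ℝ) * p i + μ * p i - 2 * (1 - p 0) * p i
      + 2 * (1 - p 0) * (dirac 0 i * p i) := fun i => by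
    have := mul_le_mul_of_nonneg_left (tsum_abs_sub_mul_le hpos hsum hmean i) (hpos i)
    linarith
  have hnonneg : ∀ i, 0 ≤ p i * row i := fun i =>
    mul_nonneg (hpos i) (tsum_nonneg fun j => mul_nonneg (abs_nonneg _) (hpos j))
  rw [tsum_congr hrow]
  have := hasSum_le hle (Summable.of_nonneg_of_le hnonneg hle hbound.summable).hasSum hbound
  linarith

lemma sq_one_sub_le_mul_one_sub_gini {p : ℕ → ℝ} {μ : ℝ} (hpos : ∀ n, 0 ≤ p n)
    (hsum : HasSum p 1) (hmean : HasSum (fun n : ℕ => (n : ℝ) * p n) μ) :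
    (1 - p 0) ^ 2 ≤ μ * (1 - Gini μ p) := by
  have hD := tsum_tsum_abs_sub_mul_mul_le hpos hsum hmean
  have hD_nonneg : 0 ≤ ∑' i : ℕ, ∑' j : ℕ, |(i : ℝ) - j| * p i * p j :=
    tsum_nonneg fun i => tsum_nonneg fun j =>
      mul_nonneg (mul_nonneg (abs_nonneg _) (hpos i)) (hpos j)
  unfold Gini
  -- for `μ = 0` the Gini index is `0` (as `1 / 0 = 0`), and `hD` forces `p 0 = 1`
  rcases eq_or_ne μ 0 with rfl | hμ
  · nlinarith
  · field_simp
    linarith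

theorem stmt_2_general (μ : ℝ) (p : ℕ → ℝ)
    (hpos : ∀ n, 0 ≤ p n) (hsum : HasSum p 1)
    (hmean : HasSum (fun n : ℕ => (n : ℝ) * p n) μ) :
    (∑' n : ℕ, |p n - dirac 0 n|) ≤ 2 * Real.sqrt μ * Real.sqrt (1 - Gini μ p) := by
  have hμ0 : 0 ≤ μ := hmean.nonneg fun n => mul_nonneg n.cast_nonneg (hpos n)
  have hp0 : p 0 ≤ 1 := le_hasSum hsum 0 fun n _ => hpos n
  have hsq := sq_one_sub_le_mul_one_sub_gini hpos hsum hmean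
  rw [tsum_abs_sub_dirac hpos hsum, mul_assoc, ← Real.sqrt_mul hμ0]
  gcongr
  exact (Real.le_sqrt (by linarith) ((sq_nonneg _).trans hsq)).mpr hsq

theorem stmt_2 (μ : ℝ) (hμ : 0 < μ) (p : ℕ → ℝ)
    (hpos : ∀ n, 0 ≤ p n) (hsum : HasSum p 1)
    (hmean : HasSum (fun n : ℕ => (n : ℝ) * p n) μ) :
    (∑' n : ℕ, |p n - dirac 0 n|) ≤ 2 * Real.sqrt μ * Real.sqrt (1 - Gini μ p) :=
  stmt_2_general μ p hpos hsum hmean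
end
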